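/- Let (J_n, w_n)_{n≥0} be an admissible sequence in the sense of Bédard (J_0 = J, J_n = J_{n-1} ∩ w_{n-1} δ(J_{n-1}) w_{n-1}^{-1}, each w_n minimal in W_{J_n} w_n W_{δ(J_n)}, and w_n ∈ W_{J_n} w_{n-1} W_{δ(J_{n-1})}), with eventual value w_∞. Then for every n ≥ 0, w_n is the unique minimal length element of the double coset W_J w_∞ W_{δ(J_n)} (where J = J_0). -/

import Mathlib

/-!
Write `W_K` for the subgroup generated by `K`. By induction on `n`, `w_n` has no left descent in
`J` and `W_J ∩ w_n W_{δ(J_n)} w_n⁻¹ ⊆ W_{J_n}`. Kilmoyer's theorem for the pair `(J_n, δ(J_n))`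
shrinks the right-hand side of the inclusion to `W_{J_{n+1}}`. Write `w_{n+1} = x w_n y` with
`x ∈ W_{J_{n+1}}`, `y ∈ W_{δ(J_n)}`: by the exchange property a left descent `s ∈ J` of
`w_{n+1}` is a left inversion of `x`, or `x⁻¹ s x` is a left inversion of `w_n`, or `x⁻¹ s x`
lies in `W_J ∩ w_n W_{δ(J_n)} w_n⁻¹`. The middle case is excluded by the induction hypothesis and
the others put `s` in `J_{n+1}`, against the minimality of `w_{n+1}`. Finally `w_∞` lies in
`W_J w_n W_{δ(J_n)}`, and an element without left `J`-descents and right `δ(J_n)`-descents is the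
unique shortest element of its double coset.

The exchange property is proved with Bourbaki's permutation representation of `W` on
`W × ZMod 2`: it shows that the parity of the number of occurrences of `t` in the left inversion
sequence of a word depends only on the product of the word.
-/

/-- A Bédard-admissible sequence `t n = (J_n, w_n)` (as in 4.1, 4.2 of the paper). -/
def BedardAdmissible {B W : Type*} [Group W] {M : CoxeterMatrix B}
    (cs : CoxeterSystem M W) (δ : W ≃* W) (J : Set W) (t : ℕ → Set W × W) : Prop :=
  (t 0).1 = J ∧
  (∀ n : ℕ, 1 ≤ n → (t n).1 =
    (t (n - 1)).1 ∩ (fun x => (t (n - 1)).2 * x * ((t (n - 1)).2)⁻¹) '' ((⇑δ) '' (t (n - 1)).1)) ∧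
  (∀ n : ℕ, ∀ u ∈ Subgroup.closure (t n).1, cs.length (t n).2 ≤ cs.length (u * (t n).2)) ∧
  (∀ n : ℕ, ∀ u ∈ Subgroup.closure ((⇑δ) '' (t n).1), cs.length (t n).2 ≤ cs.length ((t n).2 * u)) ∧
  (∀ n : ℕ, 1 ≤ n → ∃ x ∈ Subgroup.closure (t n).1, ∃ y ∈ Subgroup.closure ((⇑δ) '' (t (n - 1)).1),
    (t n).2 = x * (t (n - 1)).2 * y)

theorem Subgroup.mem_closure_of_conj_mul_mul_mem_closure {G : Type*} [Group G]
    {K A A' A'' : Set G} (hA : A ⊆ K) (hA'' : A'' ⊆ A') {d x y : G}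
    (hconj : ∀ g ∈ closure K, d⁻¹ * g * d ∈ closure A' → g ∈ closure A)
    (hx : x ∈ closure A) (hy : y ∈ closure A') :
    ∀ g ∈ closure K, (x * d * y)⁻¹ * g * (x * d * y) ∈ closure A'' → g ∈ closure A := by
  intro g hg hgw
  have hx' : x ∈ closure K := closure_mono hA hx
  have hg' := hconj (x⁻¹ * g * x) (mul_mem (mul_mem (inv_mem hx') hg) hx') (by
    rw [show d⁻¹ * (x⁻¹ * g * x) * d = y * ((x * d * y)⁻¹ * g * (x * d * y)) * y⁻¹ by group]
    exact mul_mem (mul_mem hy (closure_mono hA'' hgw)) (inv_mem hy))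
  rw [show g = x * (x⁻¹ * g * x) * x⁻¹ by group]
  exact mul_mem (mul_mem hx hg') (inv_mem hx)

namespace CoxeterSystem

open List
open scoped Classical

variable {B W : Type*} [Group W] {M : CoxeterMatrix B} (cs : CoxeterSystem M W)

local prefix:100 "s " => cs.simple
local prefix:100 "π " => cs.wordProd
local prefix:100 "ℓ " => cs.length
local prefix:100 "lis " => cs.leftInvSeq

theorem simple_mul_mul_simple_eq_simple_iff (i : B) (w : W) : s i * w * s i = s i ↔ w = s i := by
  constructor
  · intro h
    simpa [mul_assoc] using congrArg (fun z => s i * z * s i) h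
  · rintro rfl
    simp [cs.simple_mul_simple_self]

theorem eta_involutive (i : B) : Function.Involutive
    (fun p : W × ZMod 2 => (s i * p.1 * s i, p.2 + if p.1 = s i then 1 else 0)) := by
  rintro ⟨w, e⟩
  ext
  · simp [mul_assoc]
  · dsimp only
    rw [simple_mul_mul_simple_eq_simple_iff]
    split_ifs
    · rw [add_assoc, CharTwo.add_self_eq_zero, add_zero]
    · rw [add_zero, add_zero]

noncomputable def eta (i : B) : Equiv.Perm (W × ZMod 2) := (cs.eta_involutive i).toPerm

theorem eta_apply (i : B) (w : W) (e : ZMod 2) :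
    cs.eta i (w, e) = (s i * w * s i, e + if w = s i then 1 else 0) := rfl

theorem count_map_conj_simple (i : B) (t : W) (L : List W) :
    count t (L.map (MulAut.conj (s i))) = count (s i * t * s i) L := by
  have ht : t = MulAut.conj (s i) (s i * t * s i) := by
    simp [← mul_assoc, cs.simple_mul_simple_self]
  conv_lhs => rw [ht]
  exact count_map_of_injective _ _ (MulAut.conj (s i)).injective _

theorem leftInvSeq_cons (i : B) (ω : List B) :
    lis (i :: ω) = s i :: (lis ω).map (MulAut.conj (s i)) := rfl

theorem prod_map_eta_reverse_apply (ω : List B) (t : W) (e : ZMod 2) :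
    (ω.reverse.map cs.eta).prod (t, e) = ((π ω)⁻¹ * t * π ω, e + count t (lis ω)) := by
  induction ω generalizing t e with
  | nil => simp
  | cons i ω ih =>
    rw [reverse_cons, map_append, prod_append, Equiv.Perm.mul_apply, map_singleton, prod_singleton,
      eta_apply, ih, leftInvSeq_cons, count_cons, cs.count_map_conj_simple]
    simp only [wordProd_cons, mul_inv_rev, inv_simple, mul_assoc, beq_iff_eq, Prod.mk.injEq,
      true_and]
    push_cast
    rw [eq_comm (a := s i)]
    ring

theorem prod_map_eta_alternatingWord (i j : B) (m : ℕ) :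
    ((alternatingWord j i (2 * m)).reverse.map cs.eta).prod = (cs.eta i * cs.eta j) ^ m := by
  induction m with
  | zero => simp [alternatingWord]
  | succ m ih =>
    rw [show 2 * (m + 1) = 2 * m + 1 + 1 by ring, alternatingWord_succ, alternatingWord_succ]
    simp only [concat_eq_append, reverse_append, reverse_cons, reverse_nil, nil_append,
      cons_append, map_cons, prod_cons, ih, pow_succ', mul_assoc]

theorem even_count_leftInvSeq_alternatingWord (i j : B) (t : W) :
    Even (count t (lis (alternatingWord i j (2 * M i j)))) := by
  set L := lis (alternatingWord i j (2 * M i j))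
  have hlen : L.length = 2 * M i j := by simp [L]
  have hperiodic : L.drop (M i j) = L.take (M i j) := by
    refine ext_getElem (by simp [hlen]; omega) fun k h₁ h₂ => ?_
    simp only [getElem_drop, getElem_take, L]
    rw [getElem_leftInvSeq_alternatingWord cs i j _ _ (by simp at h₂; omega),
      getElem_leftInvSeq_alternatingWord cs i j _ _ (by simp at h₂; omega),
      prod_alternatingWord_eq_mul_pow, prod_alternatingWord_eq_mul_pow,
      show (2 * (M i j + k) + 1) / 2 = M i j + k by omega, show (2 * k + 1) / 2 = k by omega,
      pow_add, M.symmetric i j, simple_mul_simple_pow, one_mul]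
    simp [parity_simps]
  rw [← take_append_drop (M i j) L, count_append, hperiodic]
  exact ⟨_, rfl⟩

theorem isLiftable_eta : M.IsLiftable cs.eta := by
  intro i j
  rw [M.symmetric i j, ← prod_map_eta_alternatingWord]
  refine Equiv.ext fun ⟨t, e⟩ => ?_
  rw [prod_map_eta_reverse_apply, prod_alternatingWord_eq_mul_pow,
    ZMod.natCast_eq_zero_iff_even.mpr (cs.even_count_leftInvSeq_alternatingWord j i t)]
  simp

noncomputable def etaRep : W →* Equiv.Perm (W × ZMod 2) := cs.lift ⟨cs.eta, cs.isLiftable_eta⟩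

theorem etaRep_wordProd (ω : List B) : cs.etaRep (π ω) = (ω.map cs.eta).prod := by
  rw [wordProd, map_list_prod, map_map]
  congr 1
  exact map_congr_left fun i _ => cs.lift_apply_simple cs.isLiftable_eta i

theorem natCast_count_leftInvSeq_eq {ω ω' : List B} (h : π ω = π ω') (t : W) :
    (count t (lis ω) : ZMod 2) = count t (lis ω') := by
  have h' : (ω.reverse.map cs.eta).prod (t, 0) = (ω'.reverse.map cs.eta).prod (t, 0) := by
    rw [← etaRep_wordProd, ← etaRep_wordProd, wordProd_reverse, wordProd_reverse, h]
  have h'' := congrArg Prod.snd h'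
  rwa [prod_map_eta_reverse_apply, prod_map_eta_reverse_apply, zero_add, zero_add] at h''

theorem leftInvSeq_append (ω ω' : List B) :
    lis (ω ++ ω') = lis ω ++ (lis ω').map (MulAut.conj (π ω)) := by
  induction ω with
  | nil => simp
  | cons i ω ih =>
    simp only [cons_append, leftInvSeq_cons, ih, map_append, map_map, wordProd_cons, map_mul]
    rfl

theorem odd_count_leftInvSeq_palindrome (α : List B) (i : B) :
    Odd (count (π α * s i * (π α)⁻¹) (lis (α ++ i :: α.reverse))) := by
  induction α with
  | nil => simp
  | cons j α ih =>
    set γ := α ++ i :: α.reverse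
    set t := π α * s i * (π α)⁻¹
    have hγ : π γ = t := by simp [γ, t, wordProd_append, wordProd_cons, mul_assoc]
    have hword : j :: α ++ i :: (j :: α).reverse = j :: γ.concat j := by simp [γ]
    have ht : π (j :: α) * s i * (π (j :: α))⁻¹ = s j * t * s j := by
      simp [t, wordProd_cons, mul_assoc]
    rw [hword, ht, leftInvSeq_cons, count_cons, cs.count_map_conj_simple, leftInvSeq_concat,
      concat_eq_append, count_append, count_singleton, hγ]
    simp only [← mul_assoc, cs.simple_mul_simple_self, one_mul, cs.simple_mul_simple_cancel_right,
      beq_iff_eq]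
    rw [mul_inv_eq_iff_eq_mul, mul_right_inj, eq_comm (a := s j) (b := s j * t * s j),
      simple_mul_mul_simple_eq_simple_iff, eq_comm (a := s j)]
    split_ifs
    · exact ih.add_even even_two
    · exact ih

theorem mem_leftInvSeq_of_isLeftInversion {ω : List B} {t : W}
    (ht : cs.IsLeftInversion (π ω) t) : t ∈ lis ω := by
  obtain ⟨⟨q, i, rfl⟩, hlt⟩ := ht
  obtain ⟨α, rfl⟩ := cs.wordProd_surjective q
  set t := π α * s i * (π α)⁻¹
  have htt : t * t = 1 := IsReflection.mul_self ⟨π α, i, rfl⟩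
  obtain ⟨ω', hω', hπω'⟩ := cs.exists_isReduced (t * π ω)
  have hπρ : π (α ++ i :: α.reverse) = t := by
    simp [t, wordProd_append, wordProd_cons, mul_assoc]
  have hπ : π ((α ++ i :: α.reverse) ++ ω') = π ω := by
    rw [wordProd_append, ← hπω', hπρ, ← mul_assoc, htt, one_mul]
  have hnot : count t (lis ω') = 0 := count_eq_zero.mpr fun hmem => by
    have := (cs.isLeftInversion_of_mem_leftInvSeq hω' hmem).2
    rw [← hπω', ← mul_assoc, htt, one_mul] at this
    omega
  have hconj : count t ((lis ω').map (MulAut.conj t)) = count t (lis ω') := by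
    have := count_map_of_injective (lis ω') _ (MulAut.conj t).injective t
    rwa [MulAut.conj_apply, mul_inv_cancel_right] at this
  have hodd : Odd (count t (lis ((α ++ i :: α.reverse) ++ ω'))) := by
    rw [leftInvSeq_append, count_append, hπρ, hconj, hnot, add_zero]
    exact cs.odd_count_leftInvSeq_palindrome α i
  have hne := ZMod.natCast_ne_zero_iff_odd.mpr hodd
  rw [cs.natCast_count_leftInvSeq_eq hπ] at hne
  exact count_pos_iff.mp (Nat.pos_of_ne_zero fun h => hne (by rw [h, Nat.cast_zero]))

theorem exists_eraseIdx_of_isLeftInversion {ω : List B} {t : W}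
    (ht : cs.IsLeftInversion (π ω) t) : ∃ k < ω.length, t * π ω = π (ω.eraseIdx k) := by
  obtain ⟨k, hk, rfl⟩ := mem_iff_getElem.mp (cs.mem_leftInvSeq_of_isLeftInversion ht)
  rw [length_leftInvSeq] at hk
  exact ⟨k, hk, by rw [← getD_eq_getElem _ 1, getD_leftInvSeq_mul_wordProd]⟩

variable {cs} in
theorem IsLeftInversion.mul {a b t : W} (h : cs.IsLeftInversion (a * b) t) :
    cs.IsLeftInversion a t ∨ cs.IsLeftInversion b (a⁻¹ * t * a) := by
  obtain ⟨ρa, hρa, rfl⟩ := cs.exists_isReduced a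
  obtain ⟨ρb, hρb, rfl⟩ := cs.exists_isReduced b
  rw [← wordProd_append] at h
  obtain ⟨k, hk, hdel⟩ := cs.exists_eraseIdx_of_isLeftInversion h
  rw [length_append] at hk
  rcases lt_or_ge k ρa.length with hka | hka
  · left
    rw [eraseIdx_append_of_lt_length hka, wordProd_append, wordProd_append, ← mul_assoc,
      mul_left_inj] at hdel
    refine ⟨h.1, ?_⟩
    have := cs.length_wordProd_le (ρa.eraseIdx k)
    rw [length_eraseIdx_of_lt hka] at this
    rw [hdel, hρa]
    omega
  · right
    rw [eraseIdx_append_of_length_le hka, wordProd_append, wordProd_append, ← mul_assoc] at hdel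
    refine ⟨?_, ?_⟩
    · simpa using h.1.conj (π ρa)⁻¹
    · have := cs.length_wordProd_le (ρb.eraseIdx (k - ρa.length))
      rw [length_eraseIdx_of_lt (by omega)] at this
      have e : (π ρa)⁻¹ * t * π ρa * π ρb = π (ρb.eraseIdx (k - ρa.length)) := by
        rw [mul_assoc _ (π ρa), ← inv_mul_cancel_left (π ρa) (π (ρb.eraseIdx _)), ← hdel]
        group
      rw [e, hρb]
      omega

section Parabolic

variable {cs} {K : Set W}

theorem wordProd_mem_closure {ω : List B} (h : ∀ i ∈ ω, s i ∈ K) : π ω ∈ Subgroup.closure K :=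
  (Subgroup.closure K).list_prod_mem (by simpa using fun i hi => Subgroup.subset_closure (h i hi))

variable (cs) in
theorem exists_isReduced_subset_simple_mul {ρ : List B} (hρ : cs.IsReduced ρ) (i : B) :
    ∃ ρ', cs.IsReduced ρ' ∧ ρ' ⊆ i :: ρ ∧ π ρ' = s i * π ρ := by
  rcases cs.length_simple_mul (π ρ) i with hlen | hlen
  · refine ⟨i :: ρ, ?_, Subset.refl _, wordProd_cons _ _ _⟩
    rw [IsReduced, wordProd_cons, hlen, hρ, length_cons]
  · obtain ⟨k, hk, hdel⟩ := cs.exists_eraseIdx_of_isLeftInversion (ω := ρ)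
      ⟨cs.isReflection_simple i, by omega⟩
    refine ⟨ρ.eraseIdx k, ?_, fun j hj => mem_cons_of_mem i (mem_of_mem_eraseIdx hj), hdel.symm⟩
    rw [IsReduced, ← hdel, length_eraseIdx_of_lt hk]
    rw [IsReduced] at hρ
    omega

theorem exists_isReduced_of_mem_closure (hK : K ⊆ Set.range cs.simple) {u : W}
    (hu : u ∈ Subgroup.closure K) : ∃ ω, cs.IsReduced ω ∧ (∀ i ∈ ω, s i ∈ K) ∧ π ω = u := by
  have step : ∀ x ∈ K, ∀ y, (∃ ω, cs.IsReduced ω ∧ (∀ i ∈ ω, s i ∈ K) ∧ π ω = y) →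
      ∃ ω, cs.IsReduced ω ∧ (∀ i ∈ ω, s i ∈ K) ∧ π ω = x * y := by
    rintro x hx y ⟨ρ, hρ, hρK, rfl⟩
    obtain ⟨i, rfl⟩ := hK hx
    obtain ⟨ρ', hρ', hsub, hπ⟩ := cs.exists_isReduced_subset_simple_mul hρ i
    refine ⟨ρ', hρ', fun j hj => ?_, hπ⟩
    rcases mem_cons.mp (hsub hj) with rfl | hj
    exacts [hx, hρK j hj]
  induction hu using Subgroup.closure_induction_left with
  | one => exact ⟨[], by simp [IsReduced], by simp, rfl⟩
  | mul_left x hx y _ ih => exact step x hx y ih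
  | inv_mul_cancel x hx y _ ih =>
    obtain ⟨i, rfl⟩ := hK hx
    rw [inv_simple]
    exact step _ hx y ih

@[elab_as_elim]
theorem closure_induction_simple_mul (hK : K ⊆ Set.range cs.simple) {p : W → Prop} (one : p 1)
    (simple_mul : ∀ i u, s i ∈ K → u ∈ Subgroup.closure K → ℓ (s i * u) = ℓ u + 1 → p u →
      p (s i * u))
    {u : W} (hu : u ∈ Subgroup.closure K) : p u := by
  obtain ⟨ω, hω, hωK, rfl⟩ := exists_isReduced_of_mem_closure hK hu
  induction ω with
  | nil => exact one
  | cons i ω ih =>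
    have hω' : cs.IsReduced ω := by simpa using hω.drop 1
    have hωK' : ∀ j ∈ ω, s j ∈ K := fun j hj => hωK j (mem_cons_of_mem i hj)
    rw [wordProd_cons]
    refine simple_mul i _ (hωK i mem_cons_self) (wordProd_mem_closure hωK') ?_
      (ih hω' hωK' (wordProd_mem_closure hωK'))
    rw [← wordProd_cons, hω, hω', length_cons]

theorem exists_isLeftDescent_of_mem_closure (hK : K ⊆ Set.range cs.simple) {u : W}
    (hu : u ∈ Subgroup.closure K) (hne : u ≠ 1) : ∃ i, s i ∈ K ∧ cs.IsLeftDescent u i := by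
  revert hne
  refine closure_induction_simple_mul hK (fun hne => absurd rfl hne)
    (fun i u hi _ hlen _ _ => ?_) hu
  exact ⟨i, hi, by rw [IsLeftDescent, simple_mul_simple_cancel_left, hlen]; omega⟩

theorem mem_of_mem_closure_of_length_eq_one (hK : K ⊆ Set.range cs.simple) {u : W}
    (hu : u ∈ Subgroup.closure K) (h : ℓ u = 1) : u ∈ K := by
  obtain ⟨ω, hω, hωK, rfl⟩ := exists_isReduced_of_mem_closure hK hu
  rw [IsReduced, h] at hω
  obtain ⟨i, rfl⟩ := List.length_eq_one_iff.mp hω.symm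
  simpa using hωK i mem_cons_self

theorem IsLeftInversion.mem_closure (hK : K ⊆ Set.range cs.simple) {u t : W}
    (hu : u ∈ Subgroup.closure K) (h : cs.IsLeftInversion u t) : t ∈ Subgroup.closure K := by
  obtain ⟨ω, -, hωK, rfl⟩ := exists_isReduced_of_mem_closure hK hu
  obtain ⟨k, -, hdel⟩ := cs.exists_eraseIdx_of_isLeftInversion h
  rw [← mul_inv_cancel_right t (π ω), hdel]
  exact mul_mem (wordProd_mem_closure fun i hi => hωK i (mem_of_mem_eraseIdx hi))
    (inv_mem (wordProd_mem_closure hωK))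

theorem IsLeftInversion.mul_of_mem_closure (hK : K ⊆ Set.range cs.simple) {d v t : W}
    (hv : v ∈ Subgroup.closure K) (h : cs.IsLeftInversion (d * v) t) :
    cs.IsLeftInversion d t ∨ d⁻¹ * t * d ∈ Subgroup.closure K :=
  h.mul.imp_right (IsLeftInversion.mem_closure hK hv)

theorem length_mul_of_forall_le (hK : K ⊆ Set.range cs.simple) {d : W}
    (hmin : ∀ u ∈ Subgroup.closure K, ℓ d ≤ ℓ (u * d)) {u : W} (hu : u ∈ Subgroup.closure K) :
    ℓ (u * d) = ℓ u + ℓ d := by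
  refine closure_induction_simple_mul hK (by simp) (fun i u hi hu hlen ih => ?_) hu
  suffices ¬ cs.IsLeftInversion (u * d) (s i) by
    rw [mul_assoc, hlen, add_right_comm, ← ih]
    exact (cs.not_isLeftDescent_iff).mp (by simpa using this)
  intro hinv
  rcases hinv.mul with hinv | hinv
  · have := hinv.2
    omega
  · have hmem : u⁻¹ * s i * u ∈ Subgroup.closure K :=
      mul_mem (mul_mem (inv_mem hu) (Subgroup.subset_closure hi)) hu
    exact absurd (hmin _ hmem) (not_le.mpr hinv.2)

theorem le_length_mul_of_forall_not_isLeftDescent (hK : K ⊆ Set.range cs.simple) {d : W}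
    (hd : ∀ i, s i ∈ K → ¬ cs.IsLeftDescent d i) {u : W} (hu : u ∈ Subgroup.closure K) :
    ℓ d ≤ ℓ (u * d) := by
  obtain ⟨u₀, hu₀, hmin⟩ := (measure fun u => ℓ (u * d)).wf.has_min (Subgroup.closure K)
    ⟨1, one_mem _⟩
  replace hmin : ∀ u ∈ Subgroup.closure K, ℓ (u₀ * d) ≤ ℓ (u * (u₀ * d)) := fun u hu' => by
    rw [← mul_assoc]
    exact not_lt.mp (hmin _ (mul_mem hu' hu₀))
  suffices u₀ = 1 by simpa [this] using hmin u hu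
  by_contra hne
  obtain ⟨i, hi, hdesc⟩ := exists_isLeftDescent_of_mem_closure hK (inv_mem hu₀) (inv_ne_one.mpr hne)
  refine hd i hi ?_
  have hsplit : ∀ u ∈ Subgroup.closure K, ℓ (u * u₀⁻¹ * (u₀ * d)) = ℓ (u * u₀⁻¹) + ℓ (u₀ * d) :=
    fun u hu' => length_mul_of_forall_le hK hmin (mul_mem hu' (inv_mem hu₀))
  have h₁ := hsplit 1 (one_mem _)
  have h₂ := hsplit (s i) (Subgroup.subset_closure hi)
  simp only [one_mul, inv_mul_cancel_left] at h₁
  simp only [mul_assoc, inv_mul_cancel_left] at h₂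
  rw [IsLeftDescent] at hdesc ⊢
  omega

theorem not_isLeftInversion_of_forall_not_isLeftDescent (hK : K ⊆ Set.range cs.simple) {d t : W}
    (hd : ∀ i, s i ∈ K → ¬ cs.IsLeftDescent d i) (ht : t ∈ Subgroup.closure K) :
    ¬ cs.IsLeftInversion d t := fun h =>
  absurd (le_length_mul_of_forall_not_isLeftDescent hK hd ht) (not_le.mpr h.2)

theorem length_mul_of_forall_not_isLeftDescent (hK : K ⊆ Set.range cs.simple) {d : W}
    (hd : ∀ i, s i ∈ K → ¬ cs.IsLeftDescent d i) {u : W} (hu : u ∈ Subgroup.closure K) :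
    ℓ (u * d) = ℓ u + ℓ d :=
  length_mul_of_forall_le hK (fun _ hu' => le_length_mul_of_forall_not_isLeftDescent hK hd hu') hu

theorem length_mul_of_forall_not_isRightDescent (hK : K ⊆ Set.range cs.simple) {d : W}
    (hd : ∀ i, s i ∈ K → ¬ cs.IsRightDescent d i) {v : W} (hv : v ∈ Subgroup.closure K) :
    ℓ (d * v) = ℓ d + ℓ v := by
  have := length_mul_of_forall_not_isLeftDescent hK (d := d⁻¹)
    (fun i hi => by simpa [isLeftDescent_inv_iff] using hd i hi) (inv_mem hv)
  rwa [← mul_inv_rev, length_inv, length_inv, length_inv, add_comm] at this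

section DoubleCoset

variable {K K' : Set W} {d : W}

theorem mem_closure_inter_conj_of_conj_mem_closure (hK : K ⊆ Set.range cs.simple)
    (hK' : K' ⊆ Set.range cs.simple) (hd : ∀ i, s i ∈ K → ¬ cs.IsLeftDescent d i)
    (hd' : ∀ i, s i ∈ K' → ¬ cs.IsRightDescent d i) {x : W} (hx : x ∈ Subgroup.closure K)
    (hxd : d⁻¹ * x * d ∈ Subgroup.closure K') :
    x ∈ Subgroup.closure (K ∩ (fun z => d * z * d⁻¹) '' K') := by
  revert hxd
  refine closure_induction_simple_mul hK (fun _ => one_mem _) (fun i u hi hu hlen ih hy => ?_) hx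
  have hinv : cs.IsLeftInversion (d * (d⁻¹ * (s i * u) * d)) (s i) := by
    refine ⟨cs.isReflection_simple i, ?_⟩
    rw [show d * (d⁻¹ * (s i * u) * d) = s i * u * d by group,
      show s i * (s i * u * d) = u * d by simp [mul_assoc, simple_mul_simple_cancel_left],
      length_mul_of_forall_not_isLeftDescent hK hd hu,
      length_mul_of_forall_not_isLeftDescent hK hd (mul_mem (Subgroup.subset_closure hi) hu), hlen]
    omega
  rcases hinv.mul_of_mem_closure hK' hy with hdesc | hc
  · exact absurd hdesc.2 (hd i hi)
  have hcK' : d⁻¹ * s i * d ∈ K' := by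
    refine mem_of_mem_closure_of_length_eq_one hK' hc ?_
    have := length_mul_of_forall_not_isRightDescent hK' hd' hc
    rw [mul_assoc, mul_inv_cancel_left, (cs.not_isLeftDescent_iff).mp (hd i hi), ← mul_assoc]
      at this
    omega
  have hiL : s i ∈ K ∩ (fun z => d * z * d⁻¹) '' K' := ⟨hi, _, hcK', by group⟩
  refine mul_mem (Subgroup.subset_closure hiL) (ih ?_)
  rw [show d⁻¹ * u * d = (d⁻¹ * s i * d) * (d⁻¹ * (s i * u) * d) by
    simp [mul_assoc, simple_mul_simple_cancel_left]]
  exact mul_mem hc hy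

theorem length_lt_length_mul_mul (hK : K ⊆ Set.range cs.simple)
    (hK' : K' ⊆ Set.range cs.simple) (hd : ∀ i, s i ∈ K → ¬ cs.IsLeftDescent d i)
    (hd' : ∀ i, s i ∈ K' → ¬ cs.IsRightDescent d i) {u v : W} (hu : u ∈ Subgroup.closure K)
    (hv : v ∈ Subgroup.closure K') (hne : u * d * v ≠ d) : ℓ d < ℓ (u * d * v) := by
  refine closure_induction_simple_mul
    (p := fun u => ∀ v ∈ Subgroup.closure K', u * d * v ≠ d → ℓ d < ℓ (u * d * v)) hK
    (fun v hv hne => ?_) (fun i u hi hu hlen ih v hv hne => ?_) hu v hv hne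
  · have hv1 : v ≠ 1 := by rintro rfl; simp at hne
    rw [one_mul, length_mul_of_forall_not_isRightDescent hK' hd' hv]
    have := mt cs.length_eq_zero_iff.mp hv1
    omega
  have hle : ℓ d ≤ ℓ (u * d * v) := by
    by_cases h : u * d * v = d
    · rw [h]
    · exact (ih v hv h).le
  have e : s i * u * d * v = s i * (u * (d * v)) := by group
  rcases cs.length_simple_mul (u * (d * v)) i with hlen' | hlen'
  · rw [e, hlen', ← mul_assoc]
    omega
  have hinv : cs.IsLeftInversion (u * (d * v)) (s i) := ⟨cs.isReflection_simple i, by omega⟩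
  have hconj : u⁻¹ * s i * u ∈ Subgroup.closure K :=
    mul_mem (mul_mem (inv_mem hu) (Subgroup.subset_closure hi)) hu
  rcases hinv.mul with hdesc | hdesc
  · have := hdesc.2
    omega
  rcases hdesc.mul_of_mem_closure hK' hv with hdesc' | hc
  · exact absurd hdesc' (not_isLeftInversion_of_forall_not_isLeftDescent hK hd hconj)
  have e' : s i * u * d * v = u * d * (d⁻¹ * (u⁻¹ * s i * u) * d * v) := by group
  rw [e'] at hne ⊢
  exact ih _ (mul_mem hc hv) hne


end DoubleCoset


theorem forall_not_isLeftDescent_mul_mul {A A' : Set W} (hK : K ⊆ Set.range cs.simple)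
    (hA : A ⊆ K) (hA' : A' ⊆ Set.range cs.simple) {d x y : W}
    (hd : ∀ i, s i ∈ K → ¬ cs.IsLeftDescent d i)
    (hconj : ∀ g ∈ Subgroup.closure K, d⁻¹ * g * d ∈ Subgroup.closure A' →
      g ∈ Subgroup.closure A)
    (hx : x ∈ Subgroup.closure A) (hy : y ∈ Subgroup.closure A')
    (hw : ∀ i, s i ∈ A → ¬ cs.IsLeftDescent (x * d * y) i) :
    ∀ i, s i ∈ K → ¬ cs.IsLeftDescent (x * d * y) i := by
  intro i hi hdesc
  have hAS : A ⊆ Set.range cs.simple := hA.trans hK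
  suffices s i ∈ Subgroup.closure A from
    hw i (mem_of_mem_closure_of_length_eq_one hAS this (cs.length_simple i)) hdesc
  have hinv : cs.IsLeftInversion (x * (d * y)) (s i) :=
    ⟨cs.isReflection_simple i, by simpa only [IsLeftDescent, mul_assoc] using hdesc⟩
  have hx' : x ∈ Subgroup.closure K := Subgroup.closure_mono hA hx
  have hg : x⁻¹ * s i * x ∈ Subgroup.closure K :=
    mul_mem (mul_mem (inv_mem hx') (Subgroup.subset_closure hi)) hx'
  rcases hinv.mul with h | h
  · exact h.mem_closure hAS hx
  rcases h.mul_of_mem_closure hA' hy with h' | h'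
  · exact absurd h' (not_isLeftInversion_of_forall_not_isLeftDescent hK hd hg)
  rw [show s i = x * (x⁻¹ * s i * x) * x⁻¹ by group]
  exact mul_mem (mul_mem hx (hconj _ hg h')) (inv_mem hx)

end Parabolic

end CoxeterSystem

namespace BedardAdmissible

open CoxeterSystem

variable {B W : Type*} [Group W] {M : CoxeterMatrix B} {cs : CoxeterSystem M W} {δ : W ≃* W}
  {J : Set W} {t : ℕ → Set W × W}

theorem fst_succ (ht : BedardAdmissible cs δ J t) (n : ℕ) :
    (t (n + 1)).1 = (t n).1 ∩ (fun x => (t n).2 * x * ((t n).2)⁻¹) '' ((⇑δ) '' (t n).1) := by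
  simpa using ht.2.1 (n + 1) (by omega)

theorem exists_snd_succ_eq (ht : BedardAdmissible cs δ J t) (n : ℕ) :
    ∃ x ∈ Subgroup.closure (t (n + 1)).1, ∃ y ∈ Subgroup.closure ((⇑δ) '' (t n).1),
      (t (n + 1)).2 = x * (t n).2 * y := by
  simpa using ht.2.2.2.2 (n + 1) (by omega)

theorem fst_antitone (ht : BedardAdmissible cs δ J t) : Antitone fun n => (t n).1 :=
  antitone_nat_of_succ_le fun n => by
    rw [ht.fst_succ n]
    exact Set.inter_subset_left

theorem fst_subset (ht : BedardAdmissible cs δ J t) (n : ℕ) : (t n).1 ⊆ J :=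
  ht.1 ▸ ht.fst_antitone (Nat.zero_le n)

theorem image_fst_subset_range (ht : BedardAdmissible cs δ J t) (hJ : J ⊆ Set.range cs.simple)
    (hδ : (⇑δ) '' Set.range cs.simple = Set.range cs.simple) (n : ℕ) :
    (⇑δ) '' (t n).1 ⊆ Set.range cs.simple :=
  hδ ▸ Set.image_mono ((ht.fst_subset n).trans hJ)

theorem not_isLeftDescent (ht : BedardAdmissible cs δ J t) (n : ℕ) {i : B}
    (hi : cs.simple i ∈ (t n).1) : ¬ cs.IsLeftDescent (t n).2 i :=
  not_lt.mpr (ht.2.2.1 n _ (Subgroup.subset_closure hi))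

theorem not_isRightDescent (ht : BedardAdmissible cs δ J t) (n : ℕ) {i : B}
    (hi : cs.simple i ∈ (⇑δ) '' (t n).1) : ¬ cs.IsRightDescent (t n).2 i :=
  not_lt.mpr (ht.2.2.2.1 n _ (Subgroup.subset_closure hi))

theorem snd_mem_doubleCoset (ht : BedardAdmissible cs δ J t) {n m : ℕ} (hnm : n ≤ m) :
    ∃ p ∈ Subgroup.closure J, ∃ q ∈ Subgroup.closure ((⇑δ) '' (t n).1),
      (t m).2 = p * (t n).2 * q := by
  induction m, hnm using Nat.le_induction with
  | base => exact ⟨1, one_mem _, 1, one_mem _, by group⟩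
  | succ m hnm ih =>
    obtain ⟨p, hp, q, hq, hpq⟩ := ih
    obtain ⟨x, hx, y, hy, hxy⟩ := ht.exists_snd_succ_eq m
    refine ⟨x * p, mul_mem (Subgroup.closure_mono (ht.fst_subset _) hx) hp, q * y,
      mul_mem hq (Subgroup.closure_mono (Set.image_mono (ht.fst_antitone hnm)) hy), ?_⟩
    rw [hxy, hpq]
    group

theorem forall_not_isLeftDescent_and_conj (ht : BedardAdmissible cs δ J t)
    (hJ : J ⊆ Set.range cs.simple) (hδ : (⇑δ) '' Set.range cs.simple = Set.range cs.simple)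
    (n : ℕ) :
    (∀ i, cs.simple i ∈ J → ¬ cs.IsLeftDescent (t n).2 i) ∧
      ∀ g ∈ Subgroup.closure J, (t n).2⁻¹ * g * (t n).2 ∈ Subgroup.closure ((⇑δ) '' (t n).1) →
        g ∈ Subgroup.closure (t n).1 := by
  induction n with
  | zero => exact ⟨fun i hi => ht.not_isLeftDescent 0 (ht.1 ▸ hi), fun g hg _ => ht.1 ▸ hg⟩
  | succ n ih =>
    obtain ⟨hdesc, hconj⟩ := ih
    have hJn := (ht.fst_subset n).trans hJ
    have hδJn := ht.image_fst_subset_range hJ hδ n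
    have hconj' : ∀ g ∈ Subgroup.closure J, (t n).2⁻¹ * g * (t n).2 ∈
        Subgroup.closure ((⇑δ) '' (t n).1) → g ∈ Subgroup.closure (t (n + 1)).1 := by
      intro g hg hgd
      rw [ht.fst_succ]
      exact mem_closure_inter_conj_of_conj_mem_closure hJn hδJn
        (fun i hi => hdesc i (ht.fst_subset n hi)) (fun i hi => ht.not_isRightDescent n hi)
        (hconj g hg hgd) hgd
    obtain ⟨x, hx, y, hy, hxy⟩ := ht.exists_snd_succ_eq n
    have hw := fun i (hi : cs.simple i ∈ (t (n + 1)).1) => ht.not_isLeftDescent (n + 1) hi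
    rw [hxy] at hw ⊢
    exact ⟨forall_not_isLeftDescent_mul_mul hJ (ht.fst_subset _) hδJn hdesc hconj' hx hy hw,
      Subgroup.mem_closure_of_conj_mul_mul_mem_closure (ht.fst_subset _)
        (Set.image_mono (ht.fst_antitone n.le_succ)) hconj' hx hy⟩

end BedardAdmissible

theorem bedard_wn_min_double_coset_general
    {B W : Type*} [Group W] {M : CoxeterMatrix B} (cs : CoxeterSystem M W)
    (δ : W ≃* W) (hδ : (⇑δ) '' Set.range cs.simple = Set.range cs.simple)
    (J : Set W) (hJ : J ⊆ Set.range cs.simple)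
    (t : ℕ → Set W × W) (ht : BedardAdmissible cs δ J t)
    (winf : W) (hstab : ∃ N : ℕ, ∀ n : ℕ, N ≤ n → (t n).2 = winf) :
    ∀ n : ℕ,
      (t n).2 ∈ {x : W | ∃ p ∈ Subgroup.closure J, ∃ q ∈ Subgroup.closure ((⇑δ) '' (t n).1),
        x = p * winf * q} ∧
      ∀ u ∈ {x : W | ∃ p ∈ Subgroup.closure J, ∃ q ∈ Subgroup.closure ((⇑δ) '' (t n).1),
        x = p * winf * q}, u ≠ (t n).2 → cs.length (t n).2 < cs.length u := by
  intro n
  obtain ⟨N, hN⟩ := hstab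
  obtain ⟨p, hp, q, hq, hpq⟩ := ht.snd_mem_doubleCoset (le_max_right N n)
  rw [hN _ (le_max_left N n)] at hpq
  refine ⟨⟨p⁻¹, inv_mem hp, q⁻¹, inv_mem hq, by rw [hpq]; group⟩, ?_⟩
  rintro _ ⟨a, ha, b, hb, rfl⟩ hne
  rw [hpq, show a * (p * (t n).2 * q) * b = a * p * (t n).2 * (q * b) by group] at hne ⊢
  exact CoxeterSystem.length_lt_length_mul_mul hJ (ht.image_fst_subset_range hJ hδ n)
    (ht.forall_not_isLeftDescent_and_conj hJ hδ n).1 (fun i hi => ht.not_isRightDescent n hi)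
    (mul_mem ha hp) (mul_mem hq hb) hne

/-- 4.2(f): for an admissible sequence with eventual value `w_∞`, each `w_n` is the unique
element of minimal length of the double coset `W_J w_∞ W_{δ(J_n)}`. -/
theorem bedard_wn_min_double_coset
    {B W : Type*} [Group W] [Fintype B] {M : CoxeterMatrix B} (cs : CoxeterSystem M W)
    (δ : W ≃* W) (hδ : (⇑δ) '' Set.range cs.simple = Set.range cs.simple)
    (J : Set W) (hJ : J ⊆ Set.range cs.simple)
    (t : ℕ → Set W × W) (ht : BedardAdmissible cs δ J t)
    (winf : W) (hstab : ∃ N : ℕ, ∀ n : ℕ, N ≤ n → (t n).2 = winf) :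
    ∀ n : ℕ,
      (t n).2 ∈ {x : W | ∃ p ∈ Subgroup.closure J, ∃ q ∈ Subgroup.closure ((⇑δ) '' (t n).1),
        x = p * winf * q} ∧
      ∀ u ∈ {x : W | ∃ p ∈ Subgroup.closure J, ∃ q ∈ Subgroup.closure ((⇑δ) '' (t n).1),
        x = p * winf * q}, u ≠ (t n).2 → cs.length (t n).2 < cs.length u :=
  bedard_wn_min_double_coset_general cs δ hδ J hJ t ht winf hstab
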